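/- arXiv:1210.5685 — 2 statements merged into one kernel-verified Lean document; each statement's English description precedes it below -/
import Mathlib

section
/- The integral of ξ over the interval [−π/2, π/2] equals −π, i.e. ∫_{−π/2}^{π/2} ξ(θ) dθ = −π. -/
/-!
A primitive of `ξ` on `(-π/2, π/2)` is `F θ = θ + (θ² - π²/4) tan θ`. Since
`θ² - π²/4 = (θ - a)(θ + a)` for `a = ±π/2` and `(θ - a)/cos θ → -1/sin a`, `F` tends to `-a`
at `a`, so the integral is `-π/2 - π/2 = -π`, provided `ξ` is integrable. That holds because `ξ`
has a sign: `cos²θ · ξ θ = (cos θ + θ sin θ)² + (θ cos θ)² - π²/4`, and the sum of squares has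
derivative `4 θ cos²θ`, hence is maximal, equal to `π²/4`, at the endpoints.
-/

open Real Set Filter Topology

/-- The test function ξ(θ) = (cos²θ + 2θ·sinθ·cosθ + θ² − π²/4)/cos²θ. -/
noncomputable def xi (θ : ℝ) : ℝ :=
  (Real.cos θ ^ 2 + 2 * θ * Real.sin θ * Real.cos θ + θ ^ 2 - Real.pi ^ 2 / 4) /
    Real.cos θ ^ 2

open Function in
theorem intervalIntegrable_deriv_of_nonpos_of_tendsto {f f' : ℝ → ℝ} {a b fa fb : ℝ}
    (hab : a < b) (hderiv : ∀ x ∈ Ioo a b, HasDerivAt f (f' x) x)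
    (hf' : ∀ x ∈ Ioo a b, f' x ≤ 0) (ha : Tendsto f (𝓝[>] a) (𝓝 fa))
    (hb : Tendsto f (𝓝[<] b) (𝓝 fb)) : IntervalIntegrable f' MeasureTheory.volume a b := by
  set F : ℝ → ℝ := update (update f a fa) b fb
  have hFf : EqOn F f (Ioo a b) := fun x hx => by
    simp only [F, update_of_ne hx.2.ne, update_of_ne hx.1.ne']
  have hcont : ContinuousOn F (Icc a b) := by
    rw [continuousOn_update_iff, continuousOn_update_iff, Icc_sdiff_right, Ico_sdiff_left]
    refine ⟨⟨fun z hz => (hderiv z hz).continuousAt.continuousWithinAt, ?_⟩, ?_⟩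
    · exact fun _ => ha.mono_left (nhdsWithin_mono _ Ioo_subset_Ioi_self)
    · rintro -
      refine (hb.congr' ?_).mono_left (nhdsWithin_mono _ Ico_subset_Iio_self)
      filter_upwards [Ioo_mem_nhdsLT hab] with _ hz using (update_of_ne hz.1.ne' _ _).symm
  have hderivF : ∀ x ∈ Ioo a b, HasDerivAt (-F) (-f' x) x := fun x hx =>
    ((hderiv x hx).congr_of_eventuallyEq
      (eventuallyEq_of_mem (Ioo_mem_nhds hx.1 hx.2) hFf)).neg
  have hint := intervalIntegral.integrableOn_deriv_of_nonneg hcont.neg hderivF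
    fun x hx => neg_nonneg.2 (hf' x hx)
  exact (intervalIntegrable_iff_integrableOn_Ioc_of_le hab.le).2 (by simpa using hint.neg)

theorem tendsto_sub_div_of_hasDerivAt {f : ℝ → ℝ} {f' a : ℝ} (hf : HasDerivAt f f' a)
    (h0 : f a = 0) (hf' : f' ≠ 0) :
    Tendsto (fun x => (x - a) / f x) (𝓝[≠] a) (𝓝 f'⁻¹) := by
  refine (hf.tendsto_slope.inv₀ hf').congr fun x => ?_
  rw [slope_def_field, h0, sub_zero, inv_div]

theorem sq_cos_add_mul_sin_add_sq_mul_cos_le {θ : ℝ} (hθ : θ ∈ Icc (-(π / 2)) (π / 2)) :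
    (cos θ + θ * sin θ) ^ 2 + (θ * cos θ) ^ 2 ≤ (π / 2) ^ 2 := by
  set g : ℝ → ℝ := fun x => (cos x + x * sin x) ^ 2 + (x * cos x) ^ 2
  have hg : ∀ x, HasDerivAt g (4 * x * cos x ^ 2) x := fun x => by
    have h1 : HasDerivAt (fun x => cos x + x * sin x) (x * cos x) x :=
      ((hasDerivAt_cos x).add ((hasDerivAt_id' x).mul (hasDerivAt_sin x))).congr_deriv (by ring)
    have h2 : HasDerivAt (fun x => x * cos x) (cos x - x * sin x) x :=
      ((hasDerivAt_id' x).mul (hasDerivAt_cos x)).congr_deriv (by ring)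
    exact ((h1.pow 2).add (h2.pow 2)).congr_deriv (by ring)
  have hmono : MonotoneOn g (Icc 0 (π / 2)) := by
    refine monotoneOn_of_hasDerivWithinAt_nonneg (convex_Icc _ _)
      (fun x _ => (hg x).continuousAt.continuousWithinAt) (fun x _ => (hg x).hasDerivWithinAt)
      fun x hx => ?_
    rw [interior_Icc] at hx
    have := hx.1.le
    positivity
  have hg_even : g |θ| = g θ := by
    rcases abs_choice θ with h | h <;> rw [h]
    simp only [g, cos_neg, sin_neg]
    ring
  have hπ : g (π / 2) = (π / 2) ^ 2 := by simp [g]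
  show g θ ≤ _
  rw [← hπ, ← hg_even]
  exact hmono ⟨abs_nonneg θ, abs_le.2 hθ⟩ ⟨by positivity, le_rfl⟩ (abs_le.2 hθ)

theorem xi_nonpos {θ : ℝ} (hθ : θ ∈ Icc (-(π / 2)) (π / 2)) : xi θ ≤ 0 := by
  have hnum : cos θ ^ 2 + 2 * θ * sin θ * cos θ + θ ^ 2 - π ^ 2 / 4
      = (cos θ + θ * sin θ) ^ 2 + (θ * cos θ) ^ 2 - (π / 2) ^ 2 := by
    linear_combination -θ ^ 2 * sin_sq_add_cos_sq θ
  unfold xi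
  rw [hnum]
  exact div_nonpos_of_nonpos_of_nonneg
    (sub_nonpos.2 (sq_cos_add_mul_sin_add_sq_mul_cos_le hθ)) (sq_nonneg _)

noncomputable def xiPrimitive (θ : ℝ) : ℝ := θ + (θ ^ 2 - π ^ 2 / 4) * tan θ

theorem hasDerivAt_xiPrimitive {θ : ℝ} (hθ : cos θ ≠ 0) : HasDerivAt xiPrimitive (xi θ) θ := by
  refine ((hasDerivAt_id θ).add (((hasDerivAt_pow 2 θ).sub_const (π ^ 2 / 4)).mul
    (hasDerivAt_tan hθ))).congr_deriv ?_
  unfold xi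
  rw [tan_eq_sin_div_cos]
  field_simp
  ring

theorem tendsto_xiPrimitive {a : ℝ} (ha : |a| = π / 2) :
    Tendsto xiPrimitive (𝓝[≠] a) (𝓝 (-a)) := by
  have hcos : cos a = 0 := by rw [← cos_abs, ha, cos_pi_div_two]
  have hsin : sin a ^ 2 = 1 := by nlinarith [sin_sq_add_cos_sq a]
  have hsin0 : sin a ≠ 0 := fun h => by simp [h] at hsin
  have hfactor : ∀ θ, xiPrimitive θ = θ + (θ - a) / cos θ * ((θ + a) * sin θ) := fun θ => by
    have : a ^ 2 = π ^ 2 / 4 := by rw [← sq_abs, ha]; ring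
    rw [xiPrimitive, tan_eq_sin_div_cos, ← this]; ring
  have hlim := ((tendsto_sub_div_of_hasDerivAt (hasDerivAt_cos a) hcos (neg_ne_zero.2 hsin0)).mul
    (((show Continuous fun θ => (θ + a) * sin θ by fun_prop).tendsto a).mono_left
      nhdsWithin_le_nhds))
  convert (tendsto_nhdsWithin_of_tendsto_nhds continuous_id.continuousAt).add hlim using 2
  · exact hfactor _
  · field_simp; simp only [id]; ring

theorem xi_integral_full :
    ∫ θ in (-(Real.pi / 2))..(Real.pi / 2), xi θ = -Real.pi := by
  have hab : -(π / 2) < π / 2 := by linarith [pi_pos]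
  have hderiv : ∀ θ ∈ Ioo (-(π / 2)) (π / 2), HasDerivAt xiPrimitive (xi θ) θ :=
    fun θ hθ => hasDerivAt_xiPrimitive (cos_pos_of_mem_Ioo hθ).ne'
  have ha : Tendsto xiPrimitive (𝓝[>] (-(π / 2))) (𝓝 (π / 2)) := by
    have hπ : |-(π / 2)| = π / 2 := by rw [abs_neg, abs_of_pos (by positivity)]
    simpa using (tendsto_xiPrimitive hπ).mono_left (nhdsGT_le_nhdsNE _)
  have hb : Tendsto xiPrimitive (𝓝[<] (π / 2)) (𝓝 (-(π / 2))) :=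
    (tendsto_xiPrimitive (abs_of_pos (by positivity))).mono_left (nhdsLT_le_nhdsNE _)
  have hint := intervalIntegrable_deriv_of_nonpos_of_tendsto hab hderiv
    (fun θ hθ => xi_nonpos (Ioo_subset_Icc_self hθ)) ha hb
  rw [intervalIntegral.integral_eq_sub_of_hasDerivAt_of_tendsto hab hderiv hint ha hb]
  ring
end

section
/- For every θ in (−π/2, π/2), it holds that 1 − π²/4 ≤ ξ(θ) ≤ 0; moreover ξ(0) = 1 − π²/4, so the lower bound is attained at θ = 0. -/
/-!
Both bounds are monotonicity arguments on `[0, π/2]`, to which evenness of `ξ` reduces.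
Writing `ξ = (N - π²/4) / cos²` with `N θ = cos²θ + 2θ sinθ cosθ + θ²`, we have
`N' θ = 4θ cos²θ ≥ 0` and `N (π/2) = π²/4`, whence `ξ ≤ 0`.
For the lower bound,
`ξ θ - (1 - π²/4) = (θ² + 2θ sinθ cosθ - (π²/4) sin²θ) / cos²θ`.
Dividing by `sin²θ` turns the numerator into `θ²/sin²θ + 2θ cotθ - π²/4`, and
`θ²/sin²θ + 2θ cotθ` has derivative `2 cosθ (sin²θ - θ²) / sin³θ ≤ 0`,
so on `(0, π/2]` it is at least its value `π²/4` at `π/2`.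
-/

open Real Set Filter Topology

noncomputable def xiNumerator (θ : ℝ) : ℝ := cos θ ^ 2 + 2 * θ * sin θ * cos θ + θ ^ 2

lemma hasDerivAt_xiNumerator (θ : ℝ) : HasDerivAt xiNumerator (4 * θ * cos θ ^ 2) θ := by
  have h := (((hasDerivAt_cos θ).pow 2).add
    ((((hasDerivAt_id θ).const_mul 2).mul (hasDerivAt_sin θ)).mul (hasDerivAt_cos θ))).add
    ((hasDerivAt_id θ).pow 2)
  refine h.congr_deriv ?_
  simp only [id_eq, Pi.mul_apply]
  push_cast
  linear_combination (-2 * θ) * sin_sq_add_cos_sq θ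

lemma monotoneOn_xiNumerator : MonotoneOn xiNumerator (Ici 0) :=
  monotoneOn_of_hasDerivWithinAt_nonneg (convex_Ici 0)
    (fun θ _ ↦ (hasDerivAt_xiNumerator θ).continuousAt.continuousWithinAt)
    (fun θ _ ↦ (hasDerivAt_xiNumerator θ).hasDerivWithinAt)
    (fun θ hθ ↦ by rw [interior_Ici] at hθ; have : 0 ≤ θ := hθ.le; positivity)

lemma xiNumerator_pi_div_two : xiNumerator (π / 2) = π ^ 2 / 4 := by
  simp only [xiNumerator, cos_pi_div_two, sin_pi_div_two]
  ring

lemma xiNumerator_le_pi_sq_div_four {θ : ℝ} (h₀ : 0 ≤ θ) (h₁ : θ ≤ π / 2) :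
    xiNumerator θ ≤ π ^ 2 / 4 :=
  xiNumerator_pi_div_two ▸ monotoneOn_xiNumerator h₀ (by simp only [mem_Ici]; positivity) h₁

noncomputable def xiRatio (θ : ℝ) : ℝ := θ ^ 2 / sin θ ^ 2 + 2 * θ * cos θ / sin θ

lemma hasDerivAt_xiRatio {θ : ℝ} (hθ : sin θ ≠ 0) :
    HasDerivAt xiRatio (2 * cos θ * (sin θ ^ 2 - θ ^ 2) / sin θ ^ 3) θ := by
  have h := (((hasDerivAt_id θ).pow 2).div ((hasDerivAt_sin θ).pow 2) (pow_ne_zero 2 hθ)).add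
    ((((hasDerivAt_id θ).const_mul 2).mul (hasDerivAt_cos θ)).div (hasDerivAt_sin θ) hθ)
  refine h.congr_deriv ?_
  simp only [id_eq, Pi.mul_apply, Pi.pow_apply]
  push_cast
  field_simp
  linear_combination (-θ * sin θ) * sin_sq_add_cos_sq θ

lemma antitoneOn_xiRatio : AntitoneOn xiRatio (Ioc 0 (π / 2)) := by
  have hsin : ∀ θ ∈ Ioc 0 (π / 2), 0 < sin θ := fun θ hθ ↦
    sin_pos_of_pos_of_lt_pi hθ.1 (by linarith [hθ.2, pi_pos])
  refine antitoneOn_of_hasDerivWithinAt_nonpos (convex_Ioc 0 (π / 2))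
    (fun θ hθ ↦ (hasDerivAt_xiRatio (hsin θ hθ).ne').continuousAt.continuousWithinAt)
    (fun θ hθ ↦ (hasDerivAt_xiRatio (hsin θ (interior_subset hθ)).ne').hasDerivWithinAt)
    (fun θ hθ ↦ ?_)
  rw [interior_Ioc] at hθ
  have hs := hsin θ (Ioo_subset_Ioc_self hθ)
  have hc : 0 ≤ cos θ := cos_nonneg_of_mem_Icc ⟨by linarith [hθ.1, pi_pos], hθ.2.le⟩
  have hsq : sin θ ^ 2 ≤ θ ^ 2 := pow_le_pow_left₀ hs.le (sin_le hθ.1.le) 2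
  exact div_nonpos_of_nonpos_of_nonneg
    (mul_nonpos_of_nonneg_of_nonpos (by positivity) (by linarith)) (by positivity)

lemma xiRatio_pi_div_two : xiRatio (π / 2) = π ^ 2 / 4 := by
  simp only [xiRatio, cos_pi_div_two, sin_pi_div_two]
  ring

lemma pi_sq_div_four_mul_sin_sq_le {θ : ℝ} (h₀ : 0 ≤ θ) (h₁ : θ ≤ π / 2) :
    π ^ 2 / 4 * sin θ ^ 2 ≤ θ ^ 2 + 2 * θ * sin θ * cos θ := by
  rcases h₀.eq_or_lt with rfl | hpos
  · simp
  have hs : 0 < sin θ := sin_pos_of_pos_of_lt_pi hpos (by linarith [pi_pos])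
  have hratio : π ^ 2 / 4 ≤ xiRatio θ := xiRatio_pi_div_two ▸
    antitoneOn_xiRatio ⟨hpos, h₁⟩ ⟨by positivity, le_rfl⟩ h₁
  calc π ^ 2 / 4 * sin θ ^ 2 ≤ xiRatio θ * sin θ ^ 2 := by gcongr
    _ = θ ^ 2 + 2 * θ * sin θ * cos θ := by
      simp only [xiRatio]
      field_simp

lemma xi_neg (θ : ℝ) : xi (-θ) = xi θ := by
  simp only [xi, sin_neg, cos_neg]
  ring

lemma xi_bounds_of_nonneg {θ : ℝ} (h₀ : 0 ≤ θ) (h₁ : θ < π / 2) :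
    1 - π ^ 2 / 4 ≤ xi θ ∧ xi θ ≤ 0 := by
  have hc : 0 < cos θ ^ 2 := pow_pos (cos_pos_of_mem_Ioo ⟨by linarith, h₁⟩) 2
  have hlower := pi_sq_div_four_mul_sin_sq_le h₀ h₁.le
  have hupper : xiNumerator θ ≤ π ^ 2 / 4 := xiNumerator_le_pi_sq_div_four h₀ h₁.le
  rw [xiNumerator] at hupper
  refine ⟨?_, div_nonpos_of_nonpos_of_nonneg (by linarith) hc.le⟩
  rw [xi, le_div_iff₀ hc]
  linear_combination hlower - (π ^ 2 / 4) * sin_sq_add_cos_sq θ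

theorem xi_bounds :
    (∀ θ ∈ Set.Ioo (-(Real.pi / 2)) (Real.pi / 2),
      1 - Real.pi ^ 2 / 4 ≤ xi θ ∧ xi θ ≤ 0) ∧
    xi 0 = 1 - Real.pi ^ 2 / 4 := by
  refine ⟨fun θ hθ ↦ ?_, by simp [xi]⟩
  rcases le_total 0 θ with h | h
  · exact xi_bounds_of_nonneg h hθ.2
  · rw [← xi_neg]
    exact xi_bounds_of_nonneg (neg_nonneg.2 h) (by linarith [hθ.1])
end
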